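/- For any solution of the N-dcmKP hierarchy with dressing function φ = ∑_{n≥0} φ_n k^{−n}, the coefficient φ_0(s,t) satisfies ∂φ_0/∂t_n = −(𝓛^n)_0 for all n ≥ 1 and ∂φ_0/∂s = log p_0, where (𝓛^n)_0 denotes the coefficient of k^0 in 𝓛^n. -/

import Mathlib

noncomputable section
namespace DcmKPPaper

/-- Ring of "functions of `x`, `s` and `t = (t₁, t₂, …)`", modelled as formal
power series: variable `0` is `x`, variable `1` is `s`, variable `n + 1` is
`tₙ` (`n ≥ 1`). -/
abbrev Fn : Type := MvPowerSeries ℕ ℝ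

/-- Formal partial derivative with respect to the `i`-th variable. -/
def D (i : ℕ) (f : Fn) : Fn :=
  fun m => ((m i : ℝ) + 1) * f (m + Finsupp.single i 1)

/-- the variable `x`. -/
def xVar : Fn := MvPowerSeries.X 0
/-- the variable `s`. -/
def sVar : Fn := MvPowerSeries.X 1
/-- the variable `tₙ`. -/
def tVar (n : ℕ) : Fn := MvPowerSeries.X (n + 1)

/-- constant coefficient of a function. -/
def cc (f : Fn) : ℝ := MvPowerSeries.constantCoeff (σ := ℕ) (R := ℝ) f
/-- constant function. -/
def Cc (r : ℝ) : Fn := MvPowerSeries.C (σ := ℕ) (R := ℝ) r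

/-- `exp f`: real exponential of the constant term times the formal
exponential series of the remainder. -/
def expF (f : Fn) : Fn :=
  Real.exp (cc f) • ∑ᶠ n : ℕ, ((Nat.factorial n : ℝ))⁻¹ • (f - Cc (cc f)) ^ n

/-- `log f` for a nonvanishing (positive) function `f`. -/
def logF (f : Fn) : Fn :=
  Cc (Real.log (cc f)) +
    ∑ᶠ n : ℕ, ((-1 : ℝ) ^ n / (n + 1 : ℝ)) • ((cc f)⁻¹ • f - 1) ^ (n + 1)

/-- Generalized binomial coefficient `C(m, k)` for `m : ℤ`. -/
def gch (m : ℤ) (k : ℕ) : ℝ :=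
  (∏ i ∈ Finset.range k, ((m : ℝ) - (i : ℝ))) / (Nat.factorial k : ℝ)

/-- Formal (Laurent-type) series `∑ⱼ aⱼ kʲ` in the variable `k`, encoded by
their coefficient families. -/
abbrev LS : Type := ℤ → Fn

def mulL (f g : LS) : LS := fun j =>
  ∑ᶠ p : ℤ × ℤ, if p.1 + p.2 = j then f p.1 * g p.2 else 0

def oneL : LS := fun j => if j = 0 then 1 else 0
/-- the series `k`. -/
def kVar : LS := fun j => if j = 1 then 1 else 0
/-- the series `k⁻¹`. -/
def kInv : LS := fun j => if j = -1 then 1 else 0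
/-- a function, viewed as a series of order `0`. -/
def cL (f : Fn) : LS := fun j => if j = 0 then f else 0

def powL (f : LS) : ℕ → LS
  | 0 => oneL
  | n + 1 => mulL f (powL f n)

/-- `∂/∂k`. -/
def DkL (f : LS) : LS := fun j => ((j + 1 : ℤ) : ℝ) • f (j + 1)
/-- coefficientwise partial derivative in the `i`-th variable. -/
def DL (i : ℕ) (f : LS) : LS := fun j => D i (f j)

/-- Poisson bracket `{f, g} = (∂f/∂k)(∂g/∂x) - (∂f/∂x)(∂g/∂k)`. -/
def pb (f g : LS) : LS := mulL (DkL f) (DL 0 g) - mulL (DL 0 f) (DkL g)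

/-- part of a series with positive powers of `k`. -/
def posL (f : LS) : LS := fun j => if 0 < j then f j else 0
/-- part of a series with nonnegative powers of `k`. -/
def nonnegL (f : LS) : LS := fun j => if 0 ≤ j then f j else 0

/-- `f · k^{-d}`. -/
def shiftL (d : ℤ) (f : LS) : LS := fun j => f (j + d)

/-- `𝓑ₙ = (𝓛ⁿ)_{>0}`. -/
def BL (L : LS) (n : ℕ) : LS := posL (powL L n)

/-- `log R` for a series `R = r₀ + r₋₁k⁻¹ + ⋯` of order `≤ 0` with
nonvanishing (positive) leading coefficient `r₀`. -/
def logL (f : LS) : LS :=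
  cL (logF (f 0)) +
    ∑ᶠ n : ℕ, ((-1 : ℝ) ^ n / (n + 1 : ℝ)) •
      powL (mulL (cL (Ring.inverse (f 0))) f - oneL) (n + 1)

/-- The part `log 𝓟 - N log k = log(𝓟 k^{-N}) = log p₀ + ∑_{n≥1} 𝔭ₙ k^{-n}`
of `log 𝓟`. -/
def logPreg (N : ℕ) (P : LS) : LS := logL (shiftL (N : ℤ) P)

/-- `{log 𝓟, g} = {log(𝓟k^{-N}), g} + N k⁻¹ ∂g/∂x`
(the contribution of `N log k`). -/
def pbLogP (N : ℕ) (P : LS) (g : LS) : LS :=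
  pb (logPreg N P) g + (N : ℝ) • mulL kInv (DL 0 g)

/-- `𝓛` has the form `k + u₁ + u₂ k⁻¹ + ⋯`. -/
def IsLax (L : LS) : Prop := L 1 = 1 ∧ ∀ j, 1 < j → L j = 0

/-- The equations of the `N`-dcmKP hierarchy:
`∂𝓛/∂tₙ = {𝓑ₙ, 𝓛}` (n ≥ 1), `∂𝓛/∂s = {log 𝓟, 𝓛}`, and
`∂log𝓟/∂tₙ = ∂𝓑ₙ/∂s - {log 𝓟, 𝓑ₙ}`, where
`log 𝓟 = log p₀ + N log k + ∑ 𝔭ₙ k^{-n}` is decomposed as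
`N log k + log(𝓟k^{-N})`. -/
structure DcmKPEqs (N : ℕ) (L P : LS) : Prop where
  ht : ∀ n : ℕ, 1 ≤ n → DL (n + 1) L = pb (BL L n) L
  hs : DL 1 L = pbLogP N P L
  hlog : ∀ n : ℕ, 1 ≤ n →
    DL (n + 1) (logPreg N P) = DL 1 (BL L n) - pbLogP N P (BL L n)

/-- `(𝓛, 𝓟)` is a solution of the `N`-dcmKP hierarchy, with
`𝓟 = p₀kᴺ + ⋯ + p_{N-1}k` a polynomial without constant term and `p₀`
nonvanishing (positive constant term, so that `log p₀` is real). -/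
structure DcmKP (N : ℕ) (L P : LS) : Prop where
  hL : IsLax L
  hPhigh : ∀ j, (N : ℤ) < j → P j = 0
  hPlow : ∀ j, j ≤ 0 → P j = 0
  hp0 : 0 < cc (P (N : ℤ))
  eqs : DcmKPEqs N L P

/-- `(ad f) g = {f, g}`. -/
def adL (f g : LS) : LS := pb f g

/-- `exp(ad f) g`. -/
def expAd (f : LS) (g : LS) : LS := fun j =>
  ∑ᶠ n : ℕ, ((Nat.factorial n : ℝ))⁻¹ • (adL f)^[n] g j

/-- `∇`-type sum `∑_{m≥0} (ad ψ)^m h / (m+1)!`; with `h = ∂φ/∂u` this is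
`∇_{u,ψ} φ`. -/
def nablaSum (ψ h : LS) : LS := fun j =>
  ∑ᶠ n : ℕ, ((Nat.factorial (n + 1) : ℝ))⁻¹ • (adL ψ)^[n] h j

/-- `φ = ∑_{n≥0} φₙ(s,t) k⁻ⁿ` is a dressing function of the solution
`(𝓛, 𝓟)` of the `N`-dcmKP hierarchy: `𝓛 = e^{ad φ} k`,
`∇_{tₙ,φ}φ = 𝓑ₙᶜ = 𝓑ₙ - 𝓛ⁿ`, and `∇_{s,φ}φ = log 𝓟 - log 𝓛ᴺ`
(`= log(𝓟k^{-N}) - N log(𝓛k⁻¹)`, the `N log k` parts cancelling). -/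
structure Dress (N : ℕ) (L P φ : LS) : Prop where
  hsupp : ∀ j, 0 < j → φ j = 0
  hk : L = expAd φ kVar
  hBc : ∀ n : ℕ, 1 ≤ n → nablaSum φ (DL (n + 1) φ) = BL L n - powL L n
  hs : nablaSum φ (DL 1 φ) = logPreg N P - (N : ℝ) • logL (shiftL 1 L)

/-- the series `∑_{n≥1} n tₙ k^{n-1} + x + N s k⁻¹`. -/
def mArg (N : ℕ) : LS := fun j =>
  if j = -1 then (N : ℝ) • sVar
  else if 0 ≤ j then
    ((j + 1 : ℤ) : ℝ) • tVar (j.toNat + 1) + (if j = 0 then xVar else 0)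
  else 0

/-- the Orlov–Schulman function
`𝓜 = e^{ad φ}(∑_{n≥1} n tₙ k^{n-1} + x + N s k⁻¹)`. -/
def MOS (N : ℕ) (φ : LS) : LS := expAd φ (mArg N)

/-- the expansion `∑_{n≥1} n tₙ 𝓛^{n-1} + x + N s 𝓛⁻¹ + ∑_{n≥1} vₙ 𝓛^{-n-1}`
(`Linv` being the multiplicative inverse of `𝓛`). -/
def MExp (N : ℕ) (L Linv : LS) (v : ℕ → Fn) : LS := fun j =>
  (∑ᶠ n : ℕ, ((n + 1 : ℕ) : ℝ) • (tVar (n + 1) * powL L n j)) +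
  (if j = 0 then xVar else 0) +
  (N : ℝ) • (sVar * Linv j) +
  ∑ᶠ n : ℕ, v (n + 1) * powL Linv (n + 2) j

/-! The bracket `{f, g}` lowers the `k`-degree by one, and `φ` has degree `≤ 0`. Hence in
`∇_{u,φ}φ = ∑ (ad φ)^m (∂φ/∂u) / (m+1)!` only the term `m = 0` reaches `k⁰`, so
`(∇_{u,φ}φ)₀ = ∂φ₀/∂u`. Reading the defining equations of the dressing function at `k⁰`:
`(𝓑ₙ - 𝓛ⁿ)₀ = -(𝓛ⁿ)₀`, and `(log 𝓟 - log 𝓛ᴺ)₀ = log p₀ - N log 1 = log p₀`, because the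
`k⁰`-coefficient of `log R` for `R = r₀ + r₋₁k⁻¹ + ⋯` is `log r₀`. -/

lemma finsum_apply_eq_zero {ι α M : Type*} [AddCommMonoid M] {F : ι → α → M} (a : α)
    (h : ∀ i, F i a = 0) : (∑ᶠ i, F i) a = 0 := by
  by_cases hfin : (Function.support F).Finite
  · rw [finsum_eq_sum F hfin, Finset.sum_apply]
    exact Finset.sum_eq_zero fun i _ => h i
  · rw [finsum_of_infinite_support hfin]
    rfl

lemma D_zero (i : ℕ) : D i 0 = 0 := by
  funext m
  exact mul_zero _

def DegreeLE (a : ℤ) (f : LS) : Prop := ∀ j, a < j → f j = 0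

section Degree

variable {a b : ℤ} {f g : LS}

lemma DegreeLE.mono (hab : a ≤ b) (hf : DegreeLE a f) : DegreeLE b f :=
  fun j hj => hf j (by omega)

lemma DegreeLE.mul (hf : DegreeLE a f) (hg : DegreeLE b g) : DegreeLE (a + b) (mulL f g) := by
  intro j hj
  refine finsum_eq_zero_of_forall_eq_zero fun ⟨p, q⟩ => ?_
  split_ifs with hpq
  · rcases le_or_gt p a with hp | hp
    · rw [hg q (by omega), mul_zero]
    · rw [hf p hp, zero_mul]
  · rfl

lemma DegreeLE.dkL (hf : DegreeLE a f) : DegreeLE (a - 1) (DkL f) := by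
  intro j hj
  show ((j + 1 : ℤ) : ℝ) • f (j + 1) = 0
  rw [hf (j + 1) (by omega), smul_zero]

lemma DegreeLE.dL (i : ℕ) (hf : DegreeLE a f) : DegreeLE a (DL i f) := by
  intro j hj
  show D i (f j) = 0
  rw [hf j hj, D_zero]

lemma DegreeLE.pb (hf : DegreeLE a f) (hg : DegreeLE b g) : DegreeLE (a + b - 1) (pb f g) := by
  intro j hj
  show mulL (DkL f) (DL 0 g) j - mulL (DL 0 f) (DkL g) j = 0
  rw [hf.dkL.mul (hg.dL 0) j (by omega), (hf.dL 0).mul hg.dkL j (by omega), sub_zero]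

lemma DegreeLE.iterate_adL (hf : DegreeLE 0 f) (hg : DegreeLE b g) (n : ℕ) :
    DegreeLE (b - n) ((adL f)^[n] g) := by
  induction n with
  | zero => simpa using hg
  | succ n ih =>
    rw [Function.iterate_succ_apply']
    exact (hf.pb ih).mono (by push_cast; omega)

lemma degreeLE_oneL : DegreeLE 0 oneL := by
  intro j hj
  simp [oneL, hj.ne']

lemma DegreeLE.pow (hf : DegreeLE a f) (n : ℕ) : DegreeLE (a * n) (powL f n) := by
  induction n with
  | zero => rw [Nat.cast_zero, mul_zero]; exact degreeLE_oneL
  | succ n ih => exact (hf.mul ih).mono (by push_cast; linarith)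

end Degree

/-- Only the `m = 0` term of `∑ (ad φ)^m h / (m+1)!` reaches the top degree of `h`. -/
lemma nablaSum_apply_of_degreeLE {φ h : LS} {b : ℤ} (hφ : DegreeLE 0 φ) (hh : DegreeLE b h) :
    nablaSum φ h b = h b := by
  unfold nablaSum
  rw [finsum_eq_single _ 0]
  · simp
  · intro n hn
    rw [hφ.iterate_adL hh n b (by omega), smul_zero]

lemma mulL_cL_apply (r : Fn) (f : LS) (j : ℤ) : mulL (cL r) f j = r * f j := by
  unfold mulL
  rw [finsum_eq_single _ ((0 : ℤ), j)]
  · simp [cL]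
  · rintro ⟨p, q⟩ hpq
    dsimp only
    split_ifs with h
    · have hp : p ≠ 0 := by
        rintro rfl
        exact hpq (by rw [← h, zero_add])
      simp [cL, hp]
    · rfl

lemma logF_one : logF 1 = 0 := by
  have hcc : cc 1 = 1 := map_one _
  simp [logF, hcc, Cc]

lemma logL_apply_zero {f : LS} (hf : DegreeLE 0 f) (hu : IsUnit (f 0)) :
    logL f 0 = logF (f 0) := by
  have hg : DegreeLE (-1) (mulL (cL (Ring.inverse (f 0))) f - oneL) := by
    intro j hj
    rw [Pi.sub_apply, mulL_cL_apply]
    rcases (show (0 : ℤ) ≤ j by omega).lt_or_eq with h0 | rfl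
    · simp [hf j h0, oneL, h0.ne']
    · simp [Ring.inverse_mul_cancel _ hu, oneL]
  unfold logL
  rw [Pi.add_apply, finsum_apply_eq_zero 0 fun n => ?_, add_zero]
  · simp [cL]
  · rw [Pi.smul_apply, hg.pow (n + 1) 0 (by push_cast; omega), smul_zero]

lemma logPreg_apply_zero {N : ℕ} {P : LS} (hP : ∀ j, (N : ℤ) < j → P j = 0)
    (hu : IsUnit (P N)) : logPreg N P 0 = logF (P N) := by
  have hP0 : shiftL N P 0 = P N := congrArg P (zero_add _)
  have hdeg : DegreeLE 0 (shiftL N P) := fun j hj => hP _ (by omega)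
  rw [logPreg, logL_apply_zero hdeg (hP0 ▸ hu), hP0]

lemma IsLax.logL_shiftL_apply_zero {L : LS} (hL : IsLax L) : logL (shiftL 1 L) 0 = 0 := by
  have hL0 : shiftL 1 L 0 = 1 := (congrArg L (zero_add 1)).trans hL.1
  have hdeg : DegreeLE 0 (shiftL 1 L) := fun j hj => hL.2 _ (by omega)
  rw [logL_apply_zero hdeg (hL0 ▸ isUnit_one), hL0, logF_one]

lemma Dress.nablaSum_apply_zero {N : ℕ} {L P φ : LS} (hφ : Dress N L P φ) (i : ℕ) :
    nablaSum φ (DL i φ) 0 = D i (φ 0) :=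
  nablaSum_apply_of_degreeLE hφ.hsupp (DegreeLE.dL i hφ.hsupp)

theorem dressing_phi0_general (N : ℕ) (L P φ : LS)
    (h : DcmKP N L P) (hφ : Dress N L P φ) :
    (∀ n : ℕ, 1 ≤ n → D (n + 1) (φ 0) = -(powL L n 0)) ∧
    D 1 (φ 0) = logF (P (N : ℤ)) := by
  constructor
  · intro n hn
    have h0 := congrFun (hφ.hBc n hn) 0
    rwa [hφ.nablaSum_apply_zero, Pi.sub_apply, BL, posL, if_neg (lt_irrefl 0), zero_sub] at h0
  · have hu : IsUnit (P N) := MvPowerSeries.isUnit_iff_constantCoeff.mpr h.hp0.ne'.isUnit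
    have h0 := congrFun hφ.hs 0
    rwa [hφ.nablaSum_apply_zero, Pi.sub_apply, Pi.smul_apply, logPreg_apply_zero h.hPhigh hu,
      h.hL.logL_shiftL_apply_zero, smul_zero, sub_zero] at h0

/-- for a solution of the `N`-dcmKP hierarchy with dressing
function `φ`, the coefficient `φ₀` satisfies `∂φ₀/∂tₙ = -(𝓛ⁿ)₀` (n ≥ 1) and
`∂φ₀/∂s = log p₀`. -/
theorem dressing_phi0 (N : ℕ) (hN : 0 < N) (L P φ : LS)
    (h : DcmKP N L P) (hφ : Dress N L P φ) :
    (∀ n : ℕ, 1 ≤ n → D (n + 1) (φ 0) = -(powL L n 0)) ∧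
    D 1 (φ 0) = logF (P (N : ℤ)) :=
  dressing_phi0_general N L P φ h hφ

end DcmKPPaper
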